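/- Let 1 ≤ p ≤ 2 and let X be a complex Banach space. Suppose that for every sequence (x_n)_{n∈ℕ} ⊂ X there exists a constant C ≥ 1 (possibly depending on the sequence) such that ‖∑_{n=1}^N a_n x_n n^{-s}‖_{H_p(X)} ≤ C · E_ε ‖∑_{n=1}^N ε_n a_n x_n n^{-s}‖_{H_p(X)} for all N and all scalars a_1,…,a_N ∈ ℂ. Then there exists a single constant C ≥ 1 such that ‖∑_{n=1}^N x_n n^{-s}‖_{H_p(X)} ≤ C · E_ε ‖∑_{n=1}^N ε_n x_n n^{-s}‖_{H_p(X)} for every N and every x_1,…,x_N ∈ X. -/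

import Mathlib

open MeasureTheory TopologicalSpace

noncomputable section

instance : MeasurableSpace Circle := borel Circle
instance : BorelSpace Circle := ⟨rfl⟩

/-- The Haar probability measure on the circle `𝕋 = {z : ℂ, |z| = 1}`. -/
def muT : Measure Circle := Measure.haarMeasure ⊤

/-- The Haar probability measure on the infinite polytorus `𝕋^ℕ`
(equivalently, the product of the Haar probability measures of the factors). -/
def muTN : Measure (ℕ → Circle) := Measure.haarMeasure ⊤

instance : IsProbabilityMeasure muT := by
  constructor
  simpa [muT] using Measure.haarMeasure_self (K₀ := (⊤ : PositiveCompacts Circle))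

instance : IsProbabilityMeasure muTN := by
  constructor
  simpa [muTN] using Measure.haarMeasure_self (K₀ := (⊤ : PositiveCompacts (ℕ → Circle)))

/-- The monomial `z ↦ z^{α(n)}`, where `α(n)` is the finitely supported sequence of exponents
in the prime factorization `n = ∏_i pᵢ^{αᵢ(n)}`, the primes `pᵢ = Nat.nth Nat.Prime i` being
listed in increasing order.  (For `n ≥ 1`, every prime factor of `n` is among the first `n`
primes, so the range `Finset.range n` captures all nonzero exponents.) -/
def mon (n : ℕ) (z : ℕ → Circle) : ℂ :=
  ∏ i ∈ Finset.range n, (z i : ℂ) ^ (Nat.factorization n (Nat.nth Nat.Prime i))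

/-- The complex sign `±1` associated to a boolean sign choice. -/
def sgn {N : ℕ} (ε : Fin N → Bool) (n : Fin N) : ℂ := if ε n then 1 else -1

/-- The average `E_ε = 2^{-N} ∑_{ε ∈ {-1,1}^N}` over all choices of `N` signs. -/
def Eavg (N : ℕ) (F : (Fin N → Bool) → ℝ) : ℝ :=
  (2 ^ N : ℝ)⁻¹ * ∑ ε : Fin N → Bool, F ε

/-- The `H_p(X)`-norm of the Dirichlet polynomial `∑_{n=1}^N x_n n^{-s}`, defined via the Bohr
transform as `(∫_{𝕋^ℕ} ‖∑_{n=1}^N x_n z^{α(n)}‖_X^p dz)^{1/p}`.  Here, for `n : Fin N`,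
`x n` is the coefficient of `((n : ℕ) + 1)^{-s}`. -/
def Hnorm (p : ℝ) {X : Type*} [NormedAddCommGroup X] [NormedSpace ℂ X]
    (N : ℕ) (x : Fin N → X) : ℝ :=
  (∫ z : ℕ → Circle, ‖∑ n : Fin N, mon ((n : ℕ) + 1) z • x n‖ ^ p ∂muTN) ^ (1 / p)

/-! If no uniform constant existed, pick for every `k` a Dirichlet polynomial `y k` of length
`N k` violating the inequality with constant `k + 1`, and glue them into one sequence by placing
the coefficients of `y k` at the frequencies `q_k (n + 1)`, where `q_k = ∏_{j<k} (N j + 1)` keeps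
the blocks disjoint. Since `n ↦ z^{α(n)}` is completely multiplicative and unimodular, testing the
hypothesis for the glued sequence with the indicator of the multiples of `q_k` gives back `y k` on
both sides, so the constant attached to the glued sequence would exceed every `k`. -/

open Finset Function

lemma mon_eq_prod_range {n R : ℕ} (hnR : n ≤ R) (z : ℕ → Circle) :
    mon n z = ∏ i ∈ range R, (z i : ℂ) ^ n.factorization (Nat.nth Nat.Prime i) := by
  refine prod_subset (range_subset_range.2 hnR) fun i _ hi => ?_
  have : n < Nat.nth Nat.Prime i := by
    have := Nat.add_two_le_nth_prime i
    simp only [mem_range, not_lt] at hi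
    omega
  rw [Nat.factorization_eq_zero_of_lt this, pow_zero]

lemma mon_mul {m n : ℕ} (hm : m ≠ 0) (hn : n ≠ 0) (z : ℕ → Circle) :
    mon (m * n) z = mon m z * mon n z := by
  rw [mon_eq_prod_range (Nat.le_mul_of_pos_right m (Nat.pos_of_ne_zero hn)),
    mon_eq_prod_range (Nat.le_mul_of_pos_left n (Nat.pos_of_ne_zero hm)) z, mon,
    ← prod_mul_distrib, Nat.factorization_mul hm hn]
  simp only [Finsupp.add_apply, pow_add]

lemma norm_mon (n : ℕ) (z : ℕ → Circle) : ‖mon n z‖ = 1 := by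
  simp [mon, norm_prod, norm_pow, Circle.norm_coe]

lemma Hnorm_nonneg (p : ℝ) {X : Type*} [NormedAddCommGroup X] [NormedSpace ℂ X] (N : ℕ)
    (x : Fin N → X) : 0 ≤ Hnorm p N x :=
  Real.rpow_nonneg (integral_nonneg fun _ => by positivity) _

lemma Eavg_nonneg {N : ℕ} {F : (Fin N → Bool) → ℝ} (hF : ∀ ε, 0 ≤ F ε) : 0 ≤ Eavg N F :=
  mul_nonneg (by positivity) (sum_nonneg fun ε _ => hF ε)

lemma sum_comp_of_injective {ι κ β M : Type*} [Fintype ι] [DecidableEq ι] [Fintype κ]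
    [DecidableEq κ] [Fintype β] [AddCommMonoid M] {f : ι → κ} (hf : Injective f) (G : (ι → β) → M) :
    ∑ ε : κ → β, G (ε ∘ f) = Fintype.card ({k // k ∉ Set.range f} → β) • ∑ η : ι → β, G η := by
  let e := Equiv.piEquivPiSubtypeProd (· ∈ Set.range f) fun _ => β
  let r : ({k // k ∈ Set.range f} → β) ≃ (ι → β) :=
    Equiv.arrowCongr (Equiv.ofInjective f hf).symm (Equiv.refl β)
  have hcomp (ε : κ → β) : ε ∘ f = r (e ε).1 := by
    funext i
    simp [r, e, Equiv.arrowCongr]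
  rw [← e.symm.sum_comp]
  simp only [hcomp, Equiv.apply_symm_apply, Fintype.sum_prod_type, sum_const, card_univ,
    ← smul_sum]
  rw [r.sum_comp G]

lemma Eavg_comp_of_injective {N M : ℕ} {f : Fin N → Fin M} (hf : Injective f)
    (G : (Fin N → Bool) → ℝ) : Eavg M (fun ε => G (ε ∘ f)) = Eavg N G := by
  have hNM : N ≤ M := by simpa using Fintype.card_le_of_injective f hf
  have hcard : Fintype.card ({m // m ∉ Set.range f} → Bool) = 2 ^ (M - N) := by
    rw [Fintype.card_fun, Fintype.card_subtype_compl, Set.card_range_of_injective hf]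
    simp
  have hpow : (2 : ℝ) ^ M = 2 ^ N * 2 ^ (M - N) := by
    rw [← pow_add, Nat.add_sub_cancel' hNM]
  rw [Eavg, Eavg, sum_comp_of_injective hf, hcard, nsmul_eq_mul, hpow]
  push_cast
  field_simp

section Dilation

/-- Indices in `Fin` are frequencies shifted by one: `dilate q n` is the index of `q (n + 1)`. -/
def dilate (q : ℕ) (hq : 0 < q) {N : ℕ} (n : Fin N) : Fin (q * N) :=
  ⟨q * (n + 1) - 1, by
    have : q * (n + 1) ≤ q * N := Nat.mul_le_mul_left q n.2
    have : 0 < q * (n + 1) := by positivity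
    omega⟩

variable {q : ℕ} (hq : 0 < q) {N : ℕ}

lemma dilate_val_add_one (n : Fin N) : (dilate q hq n : ℕ) + 1 = q * (n + 1) := by
  have : 0 < q * (n + 1) := by positivity
  simp only [dilate]
  omega

lemma dilate_injective : Injective (dilate q hq (N := N)) := fun n n' h => by
  have := dilate_val_add_one hq n
  rw [h, dilate_val_add_one, Nat.mul_left_cancel_iff hq] at this
  exact Fin.ext (by omega)

lemma image_dilate :
    univ.image (dilate q hq (N := N)) = univ.filter fun m : Fin (q * N) => q ∣ m + 1 := by
  ext m
  simp only [mem_image, mem_univ, true_and, mem_filter]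
  constructor
  · rintro ⟨n, rfl⟩
    exact ⟨n + 1, dilate_val_add_one hq n⟩
  · rintro ⟨t, ht⟩
    have ht0 : 0 < t := Nat.pos_of_ne_zero (by rintro rfl; simp at ht)
    have htN : t ≤ N := Nat.le_of_mul_le_mul_left (ht ▸ m.2 : q * t ≤ q * N) hq
    have htN' : t - 1 < N := by omega
    refine ⟨⟨t - 1, htN'⟩, Fin.ext ?_⟩
    have := dilate_val_add_one hq ⟨t - 1, htN'⟩
    rw [Nat.sub_add_cancel ht0] at this
    omega

variable {X : Type*} [NormedAddCommGroup X] [NormedSpace ℂ X]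

lemma Hnorm_dilate (p : ℝ) (u : Fin (q * N) → X) :
    Hnorm p (q * N) (fun m => (if q ∣ (m : ℕ) + 1 then (1 : ℂ) else 0) • u m) =
      Hnorm p N (u ∘ dilate q hq) := by
  unfold Hnorm
  congr 2
  funext z
  have hsum : ∑ m : Fin (q * N), mon (m + 1) z • (if q ∣ (m : ℕ) + 1 then (1 : ℂ) else 0) • u m =
      mon q z • ∑ n : Fin N, mon (n + 1) z • u (dilate q hq n) := calc
    _ = ∑ m ∈ univ.filter fun m : Fin (q * N) => q ∣ m + 1, mon (m + 1) z • u m := by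
      rw [sum_filter]
      congr! 1 with m
      split_ifs <;> simp
    _ = ∑ n : Fin N, mon (dilate q hq n + 1) z • u (dilate q hq n) := by
      rw [← image_dilate hq, sum_image fun n _ n' _ h => dilate_injective hq h]
    _ = _ := by
      rw [smul_sum]
      congr! 1 with n
      rw [dilate_val_add_one, mon_mul hq.ne' (Nat.succ_ne_zero n), mul_smul]
  rw [hsum, norm_smul, norm_mon, one_mul]
  rfl

lemma Eavg_Hnorm_dilate (p : ℝ) (u : Fin (q * N) → X) :
    Eavg (q * N) (fun ε => Hnorm p (q * N)
        (fun m => sgn ε m • (if q ∣ (m : ℕ) + 1 then (1 : ℂ) else 0) • u m)) =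
      Eavg N (fun η => Hnorm p N (fun n => sgn η n • u (dilate q hq n))) := by
  simp_rw [smul_comm (sgn _ _), Hnorm_dilate hq]
  exact Eavg_comp_of_injective (dilate_injective hq) fun η =>
    Hnorm p N fun n => sgn η n • u (dilate q hq n)

end Dilation

section Blocks

variable (N : ℕ → ℕ)

def blockScale (k : ℕ) : ℕ := ∏ j ∈ range k, (N j + 1)

lemma blockScale_pos (k : ℕ) : 0 < blockScale N k :=
  prod_pos fun j _ => Nat.succ_pos (N j)

lemma blockScale_mono : Monotone (blockScale N) :=
  monotone_nat_of_le_succ fun k => by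
    simp only [blockScale, prod_range_succ]
    exact Nat.le_mul_of_pos_right _ (Nat.succ_pos _)

lemma blockScale_mul_lt {k j n : ℕ} (hn : n < N k) (hkj : k < j) :
    blockScale N k * (n + 1) < blockScale N j := calc
  blockScale N k * (n + 1) < blockScale N k * (N k + 1) :=
    Nat.mul_lt_mul_of_pos_left (by omega) (blockScale_pos N k)
  _ = blockScale N (k + 1) := (prod_range_succ _ k).symm
  _ ≤ blockScale N j := blockScale_mono N hkj

lemma blockScale_mul_injective :
    Injective fun s : Σ k, Fin (N k) => blockScale N s.1 * (s.2 + 1) := by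
  have hlt {k j : ℕ} (n : Fin (N k)) (m : Fin (N j)) (hkj : k < j) :
      blockScale N k * (n + 1) < blockScale N j * (m + 1) :=
    (blockScale_mul_lt N n.2 hkj).trans_le (Nat.le_mul_of_pos_right _ m.succ_pos)
  rintro ⟨k, n⟩ ⟨j, m⟩ h
  rcases lt_trichotomy k j with hkj | rfl | hjk
  · exact absurd h (hlt n m hkj).ne
  · rw [Nat.mul_left_cancel_iff (blockScale_pos N k), Nat.add_right_cancel_iff] at h
    cases Fin.ext h
    rfl
  · exact absurd h (hlt m n hjk).ne'

end Blocks

theorem stmt3_general {X : Type*} [NormedAddCommGroup X] [NormedSpace ℂ X]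
    (p : ℝ)
    (h : ∀ x : ℕ → X, ∃ C : ℝ, 1 ≤ C ∧ ∀ (N : ℕ) (a : Fin N → ℂ),
      Hnorm p N (fun n => a n • x ((n : ℕ) + 1)) ≤
        C * Eavg N (fun ε => Hnorm p N (fun n => sgn ε n • (a n • x ((n : ℕ) + 1))))) :
    ∃ C : ℝ, 1 ≤ C ∧ ∀ (N : ℕ) (x : Fin N → X),
      Hnorm p N x ≤ C * Eavg N (fun ε => Hnorm p N (fun n => sgn ε n • x n)) := by
  by_contra! hbad
  choose N y hy using fun k : ℕ => hbad (k + 1) (by simp)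
  let x : ℕ → X := extend (fun s : Σ k, Fin (N k) => blockScale N s.1 * (s.2 + 1))
    (fun s => y s.1 s.2) 0
  obtain ⟨C, -, hC⟩ := h x
  obtain ⟨k, hCk⟩ := exists_nat_ge C
  have hq := blockScale_pos N k
  have hblock (n : Fin (N k)) : x (dilate _ hq n + 1) = y k n := by
    rw [dilate_val_add_one]
    exact (blockScale_mul_injective N).extend_apply _ _ ⟨k, n⟩
  have hk := hC (blockScale N k * N k) fun m => if blockScale N k ∣ (m : ℕ) + 1 then 1 else 0
  simp only [Hnorm_dilate hq, Eavg_Hnorm_dilate hq, comp_def, hblock] at hk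
  have hE := Eavg_nonneg fun ε => Hnorm_nonneg p (N k) fun n => sgn ε n • y k n
  nlinarith [hy k]

/-- If for every sequence `(x_n) ⊆ X` the system `(x_n n^{-s})` is RUD in `H_p(X)` (with a
constant possibly depending on the sequence), then a single uniform constant works. -/
theorem stmt3 {X : Type*} [NormedAddCommGroup X] [NormedSpace ℂ X] [CompleteSpace X]
    (p : ℝ) (hp1 : 1 ≤ p) (hp2 : p ≤ 2)
    (h : ∀ x : ℕ → X, ∃ C : ℝ, 1 ≤ C ∧ ∀ (N : ℕ) (a : Fin N → ℂ),
      Hnorm p N (fun n => a n • x ((n : ℕ) + 1)) ≤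
        C * Eavg N (fun ε => Hnorm p N (fun n => sgn ε n • (a n • x ((n : ℕ) + 1))))) :
    ∃ C : ℝ, 1 ≤ C ∧ ∀ (N : ℕ) (x : Fin N → X),
      Hnorm p N x ≤ C * Eavg N (fun ε => Hnorm p N (fun n => sgn ε n • x n)) :=
  stmt3_general p h
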